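/- If n is a positive multiple of 3 with n ≥ 3, then the signed Roman domination number of the join C₃ ∨ Cₙ equals 1. -/

import Mathlib

open Finset SimpleGraph
open scoped Classical

/-- The sum of `f` over the closed neighborhood of `v` in `G`. -/
noncomputable def closedNbrSum {V : Type*} [Fintype V] (G : SimpleGraph V)
    (f : V → ℤ) (v : V) : ℤ :=
  ∑ u ∈ Finset.univ.filter (fun u => u = v ∨ G.Adj v u), f u

/-- `f` is a signed Roman dominating function on `G`. -/
def IsSRDF {V : Type*} [Fintype V] (G : SimpleGraph V) (f : V → ℤ) : Prop :=
  (∀ v, f v = -1 ∨ f v = 1 ∨ f v = 2) ∧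
  (∀ v, 1 ≤ closedNbrSum G f v) ∧
  (∀ v, f v = -1 → ∃ u, G.Adj v u ∧ f u = 2)

/-- The signed Roman domination number of `G`. -/
noncomputable def gammaSR {V : Type*} [Fintype V] (G : SimpleGraph V) : ℤ :=
  sInf {w : ℤ | ∃ f, IsSRDF G f ∧ w = ∑ v, f v}

/-- The join of two graphs. -/
def graphJoin {V W : Type*} (G : SimpleGraph V) (H : SimpleGraph W) :
    SimpleGraph (V ⊕ W) where
  Adj x y :=
    match x, y with
    | .inl a, .inl b => G.Adj a b
    | .inr a, .inr b => H.Adj a b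
    | _, _ => True
  symm := by
    constructor
    rintro (a | a) (b | b) h <;> simp_all <;> exact h.symm
  loopless := by
    constructor
    rintro (a | a) h <;> simp_all

/-!
A vertex of `C₃` is adjacent to every other vertex of the join, so its closed neighbourhood
is the whole graph and every signed Roman dominating function has weight at least `1`.
Conversely, label `C₃` by `1, 1, -1` and, since `3 ∣ n`, label `Cₙ` periodically by
`2, -1, -1`: any three consecutive cycle vertices then sum to `0`, so every closed
neighbourhood sums to `1`, every `-1` has a neighbour labelled `2`, and the total weight is `1`.
-/

section General

variable {V : Type*} [Fintype V]

lemma closedNbrSum_eq_add_sum_neighborFinset (G : SimpleGraph V) (f : V → ℤ) (v : V)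
    [Fintype (G.neighborSet v)] :
    closedNbrSum G f v = f v + ∑ u ∈ G.neighborFinset v, f u := by
  have hfilter :
      Finset.univ.filter (fun u => u = v ∨ G.Adj v u) = insert v (G.neighborFinset v) := by
    ext u
    simp
  rw [closedNbrSum, hfilter, Finset.sum_insert (by simp)]

lemma closedNbrSum_eq_sum_of_forall_adj {G : SimpleGraph V} {v : V}
    (hv : ∀ u, u ≠ v → G.Adj v u) (f : V → ℤ) :
    closedNbrSum G f v = ∑ u, f u := by
  rw [closedNbrSum, Finset.filter_true_of_mem]
  intro u _
  exact (eq_or_ne u v).imp_right (hv u)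

lemma one_le_sum_of_isSRDF_of_forall_adj {G : SimpleGraph V} {v : V}
    (hv : ∀ u, u ≠ v → G.Adj v u) {f : V → ℤ} (hf : IsSRDF G f) :
    1 ≤ ∑ u, f u :=
  closedNbrSum_eq_sum_of_forall_adj hv f ▸ hf.2.1 v

lemma gammaSR_eq_of_isSRDF {G : SimpleGraph V} {f : V → ℤ} (hf : IsSRDF G f)
    (hmin : ∀ g, IsSRDF G g → ∑ v, f v ≤ ∑ v, g v) :
    gammaSR G = ∑ v, f v := by
  refine IsLeast.csInf_eq ⟨⟨f, hf, rfl⟩, ?_⟩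
  rintro _ ⟨g, hg, rfl⟩
  exact hmin g hg

end General

section Join

variable {V W : Type*}

lemma graphJoin_top_adj_inl (H : SimpleGraph W) (a : V) :
    ∀ u, u ≠ Sum.inl a → (graphJoin ⊤ H).Adj (Sum.inl a) u := by
  rintro (c | c) hne
  · exact fun h => hne (congrArg Sum.inl h.symm)
  · trivial

lemma closedNbrSum_graphJoin_inr [Fintype V] [Fintype W] (G : SimpleGraph V) (H : SimpleGraph W)
    (f : V ⊕ W → ℤ) (b : W) :
    closedNbrSum (graphJoin G H) f (Sum.inr b) =
      ∑ a, f (Sum.inl a) + closedNbrSum H (f ∘ Sum.inr) b := by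
  simp only [closedNbrSum, Finset.sum_filter, Fintype.sum_sum_type]
  simp [graphJoin]

end Join

section Cycle

lemma closedNbrSum_cycleGraph (n : ℕ) (g : Fin (n + 3) → ℤ) (b : Fin (n + 3)) :
    closedNbrSum (cycleGraph (n + 3)) g b = g (b - 1) + g b + g (b + 1) := by
  have hne : b - 1 ≠ b + 1 := by
    rw [Ne, sub_eq_iff_eq_add, add_assoc, left_eq_add, Fin.ext_iff, Fin.val_add]
    simp [Nat.mod_eq_of_lt (show 2 < n + 3 by omega)]
  rw [closedNbrSum_eq_add_sum_neighborFinset, cycleGraph_neighborFinset, Finset.sum_pair hne]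
  ring

lemma Fin.val_add_one_mod_of_dvd {n k : ℕ} [NeZero n] (h : k ∣ n) (b : Fin n) :
    (b + 1).val % k = (b.val + 1) % k := by
  rw [Fin.val_add, Nat.mod_mod_of_dvd _ h, Fin.val_one', Nat.add_mod, Nat.mod_mod_of_dvd _ h,
    ← Nat.add_mod]

def cycleLabel (n : ℕ) (b : Fin n) : ℤ := if b.val % 3 = 0 then 2 else -1

lemma cycleLabel_sub_one_add_add_one {n : ℕ} [NeZero n] (h : 3 ∣ n) (b : Fin n) :
    cycleLabel n (b - 1) + cycleLabel n b + cycleLabel n (b + 1) = 0 := by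
  have hnext := Fin.val_add_one_mod_of_dvd h b
  have hprev := Fin.val_add_one_mod_of_dvd h (b - 1)
  rw [sub_add_cancel] at hprev
  unfold cycleLabel
  split_ifs <;> omega

lemma sum_cycleLabel {n : ℕ} (h : 3 ∣ n) : ∑ b : Fin n, cycleLabel n b = 0 := by
  obtain ⟨k, rfl⟩ := h
  unfold cycleLabel
  rw [Fin.sum_univ_eq_sum_range (fun i => if i % 3 = 0 then (2 : ℤ) else -1)]
  induction k with
  | zero => simp
  | succ k ih =>
    rw [show 3 * (k + 1) = 3 * k + 1 + 1 + 1 by ring, Finset.sum_range_succ,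
      Finset.sum_range_succ, Finset.sum_range_succ, ih]
    simp [Nat.add_mod]

lemma exists_adj_cycleLabel_eq_two {n : ℕ} (h : 3 ∣ n + 3) {b : Fin (n + 3)}
    (hb : cycleLabel (n + 3) b = -1) :
    ∃ c, (cycleGraph (n + 3)).Adj b c ∧ cycleLabel (n + 3) c = 2 := by
  have hnext := Fin.val_add_one_mod_of_dvd h b
  have hprev := Fin.val_add_one_mod_of_dvd h (b - 1)
  rw [sub_add_cancel] at hprev
  have hb0 : b.val % 3 ≠ 0 := fun h0 => by simp [cycleLabel, h0] at hb
  by_cases h1 : b.val % 3 = 1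
  · exact ⟨b - 1, cycleGraph_adj.mpr (Or.inl (sub_sub_cancel b 1)), if_pos (by omega)⟩
  · exact ⟨b + 1, cycleGraph_adj.mpr (Or.inr (add_sub_cancel_left b 1)), if_pos (by omega)⟩

end Cycle

def joinLabel (n : ℕ) : Fin 3 ⊕ Fin n → ℤ := Sum.elim ![1, 1, -1] (cycleLabel n)

lemma sum_joinLabel {n : ℕ} (h : 3 ∣ n) : ∑ v, joinLabel n v = 1 := by
  simp [joinLabel, Fintype.sum_sum_type, Fin.sum_univ_three, sum_cycleLabel h]

lemma isSRDF_joinLabel {n : ℕ} (h : 3 ∣ n + 3) :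
    IsSRDF (graphJoin (cycleGraph 3) (cycleGraph (n + 3))) (joinLabel (n + 3)) := by
  rw [cycleGraph_three_eq_top]
  refine ⟨?_, ?_, ?_⟩
  · rintro (a | b)
    · fin_cases a <;> simp [joinLabel]
    · simp only [joinLabel, Sum.elim_inr, cycleLabel]
      split_ifs <;> simp
  · rintro (a | b)
    · rw [closedNbrSum_eq_sum_of_forall_adj (graphJoin_top_adj_inl _ a), sum_joinLabel h]
    · rw [closedNbrSum_graphJoin_inr, closedNbrSum_cycleGraph, joinLabel, Sum.elim_comp_inr,
        cycleLabel_sub_one_add_add_one h]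
      simp [Fin.sum_univ_three]
  · rintro (a | b) hneg
    · exact ⟨Sum.inr 0, trivial, by simp [joinLabel, cycleLabel]⟩
    · obtain ⟨c, hadj, hc⟩ := exists_adj_cycleLabel_eq_two h hneg
      exact ⟨Sum.inr c, hadj, hc⟩

theorem stmt3 (n : ℕ) (hn : 3 ≤ n) (hd : 3 ∣ n) :
    gammaSR (graphJoin (cycleGraph 3) (cycleGraph n)) = 1 := by
  obtain ⟨m, rfl⟩ : ∃ m, n = m + 3 := ⟨n - 3, by omega⟩
  rw [gammaSR_eq_of_isSRDF (isSRDF_joinLabel hd), sum_joinLabel hd]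
  intro g hg
  rw [sum_joinLabel hd]
  rw [cycleGraph_three_eq_top] at hg
  exact one_le_sum_of_isSRDF_of_forall_adj (graphJoin_top_adj_inl _ 0) hg
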